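/- Let T be a measure-preserving map on a probability space (Ω, μ) and A a countable measurable partition with K_w(A) < ∞ for some w ≥ 1 (atoms of measure ≤ e^{-w}). Then there is a constant C such that K_w(A^n) ≤ C n^w for all n ≥ 1, where A^n = ⋁_{j=0}^{n-1} T^{-j}A. -/

import Mathlib

open MeasureTheory

def IsCountablePartition {Ω : Type*} [MeasurableSpace Ω] (μ : Measure Ω)
    (B : ℕ → Set Ω) : Prop :=
  (∀ i, MeasurableSet (B i)) ∧ Pairwise (Function.onFun Disjoint B) ∧ μ (⋃ i, B i) = μ Set.univ

/-- Atom of the `n`-th join `A^n = ⋁_{j=0}^{n-1} T^{-j} A` with itinerary `a`. -/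
def joinAtom {Ω : Type*} (T : Ω → Ω) (A : ℕ → Set Ω) (n : ℕ) (a : Fin n → ℕ) : Set Ω :=
  ⋂ j : Fin n, T^[(j : ℕ)] ⁻¹' A (a j)

/-- `K_w(A^n)`. -/
noncomputable def KwJoin {Ω : Type*} [MeasurableSpace Ω] (μ : Measure Ω) (w : ℝ)
    (T : Ω → Ω) (A : ℕ → Set Ω) (n : ℕ) : ℝ :=
  ∑' a : Fin n → ℕ, (μ (joinAtom T A n a)).toReal *
    |Real.log (μ (joinAtom T A n a)).toReal| ^ w

/-!
Fix an itinerary `a`, write `p` for the measure of its atom of `A^n` and `P = ∏ⱼ μ(A (a j))`, so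
that `p ≤ μ(A (a j))` for every `j` (by invariance) and `-log P = ∑ⱼ |log μ(A (a j))|`. Because
`x ↦ x (-log x)^w` increases on `(0, e^{-w}]`, we get `p |log p|^w ≤ (p + P) (-log P)^w`, and by
convexity `(-log P)^w ≤ n^{w-1} ∑ⱼ |log μ(A (a j))|^w`. Summed over `a`, for each coordinate `j`
the weights `p` add up to at most `μ(A i)` on the fibre `{a j = i}`, and the weights `P` to exactly
`μ(A i)` since `∑ᵢ μ(A i) = 1`. Hence `K_w(A^n) ≤ 2 K_w(A) n^w`.
-/

open scoped ENNReal

namespace Real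

theorem rpow_mul_exp_neg_antitoneOn {w : ℝ} (hw : 0 < w) :
    AntitoneOn (fun s => s ^ w * exp (-s)) (Set.Ici w) := by
  intro t (ht : w ≤ t) s (hs : w ≤ s) hts
  have ht0 : 0 < t := hw.trans_le ht
  have hs0 : 0 < s := ht0.trans_le hts
  have key : w * (log s - log t) ≤ s - t :=
    calc w * (log s - log t) = w * log (s / t) := by rw [log_div hs0.ne' ht0.ne']
      _ ≤ w * (s / t - 1) := by gcongr; exact log_le_sub_one_of_pos (by positivity)
      _ = w / t * (s - t) := by field_simp
      _ ≤ 1 * (s - t) := by gcongr; exact (div_le_one ht0).2 ht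
      _ = s - t := one_mul _
  show s ^ w * exp (-s) ≤ t ^ w * exp (-t)
  rw [rpow_def_of_pos hs0, rpow_def_of_pos ht0, ← exp_add, ← exp_add]
  exact exp_le_exp.2 (by linarith)

theorem mul_neg_log_rpow_monotoneOn {w : ℝ} (hw : 0 < w) :
    MonotoneOn (fun x => x * (-log x) ^ w) (Set.Ioc 0 (exp (-w))) := by
  intro x ⟨hx0, hxw⟩ y ⟨hy0, hyw⟩ hxy
  have hw_le : ∀ z, 0 < z → z ≤ exp (-w) → w ≤ -log z := fun z hz hzw => by
    linarith [(log_le_iff_le_exp hz).2 hzw]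
  have h := rpow_mul_exp_neg_antitoneOn hw (hw_le y hy0 hyw) (hw_le x hx0 hxw)
    (by linarith [log_le_log hx0 hxy])
  simpa only [neg_neg, exp_log hx0, exp_log hy0, mul_comm] using h

theorem mul_neg_log_rpow_le_add_mul {w p P : ℝ} (hw : 0 < w) (hp : 0 < p) (hpw : p ≤ exp (-w))
    (hP : 0 < P) (hPw : P ≤ exp (-w)) :
    p * (-log p) ^ w ≤ (p + P) * (-log P) ^ w := by
  have hlogP : 0 ≤ -log P := by
    linarith [log_nonpos hP.le (hPw.trans (exp_le_one_iff.2 (by linarith)))]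
  rcases le_total P p with hPp | hpP
  · calc p * (-log p) ^ w ≤ p * (-log P) ^ w := by
          gcongr
          linarith [log_nonpos hp.le (hpw.trans (exp_le_one_iff.2 (by linarith)))]
      _ ≤ (p + P) * (-log P) ^ w := by gcongr; linarith
  · calc p * (-log p) ^ w ≤ P * (-log P) ^ w :=
          mul_neg_log_rpow_monotoneOn hw ⟨hp, hpw⟩ ⟨hP, hPw⟩ hpP
      _ ≤ (p + P) * (-log P) ^ w := by gcongr; linarith

open Finset in
theorem mul_abs_log_rpow_le_of_forall_le {ι : Type*} [Fintype ι] [Nonempty ι] {w p : ℝ}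
    {q : ι → ℝ} (hw : 1 ≤ w) (hp : 0 ≤ p) (hpq : ∀ j, p ≤ q j) (hq : ∀ j, q j ≤ exp (-w)) :
    p * |log p| ^ w ≤ (Fintype.card ι : ℝ) ^ (w - 1) * ((p + ∏ j, q j) * ∑ j, |log (q j)| ^ w) := by
  rcases hp.eq_or_lt with rfl | hp
  · have : 0 ≤ ∏ j, q j := prod_nonneg fun j _ => hpq j
    simp only [zero_mul]
    positivity
  have hq0 : ∀ j, 0 < q j := fun j => hp.trans_le (hpq j)
  have hP0 : 0 < ∏ j, q j := prod_pos fun j _ => hq0 j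
  have habs : ∀ x, 0 < x → x ≤ exp (-w) → |log x| = -log x := fun x hx hxw =>
    abs_of_neg (log_neg hx (hxw.trans_lt (exp_lt_one_iff.2 (by linarith))))
  have hlogP : -log (∏ j, q j) = ∑ j, |log (q j)| := by
    rw [log_prod fun j _ => (hq0 j).ne', ← sum_neg_distrib]
    exact sum_congr rfl fun j _ => (habs _ (hq0 j) (hq j)).symm
  obtain ⟨j₀⟩ := ‹Nonempty ι›
  have hPw : ∏ j, q j ≤ exp (-w) := by
    rw [← exp_log hP0, exp_le_exp]
    have := single_le_sum (fun j _ => abs_nonneg (log (q j))) (mem_univ j₀)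
    linarith [habs _ (hq0 j₀) (hq j₀), (log_le_iff_le_exp (hq0 j₀)).2 (hq j₀)]
  calc p * |log p| ^ w = p * (-log p) ^ w := by rw [habs p hp ((hpq j₀).trans (hq j₀))]
    _ ≤ (p + ∏ j, q j) * (∑ j, |log (q j)|) ^ w := by
      rw [← hlogP]
      exact mul_neg_log_rpow_le_add_mul (by linarith) hp ((hpq j₀).trans (hq j₀))
        hP0 hPw
    _ ≤ (p + ∏ j, q j) * ((Fintype.card ι : ℝ) ^ (w - 1) * ∑ j, |log (q j)| ^ w) := by
      gcongr
      simpa using rpow_sum_le_const_mul_sum_rpow_of_nonneg (s := univ) hw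
        fun j _ => abs_nonneg (log (q j))
    _ = _ := by ring

end Real

namespace ENNReal

theorem tsum_pi_prod {β : Type*} : ∀ {n : ℕ} (g : Fin n → β → ℝ≥0∞),
    ∑' a : Fin n → β, ∏ j, g j (a j) = ∏ j, ∑' i, g j i
  | 0, g => by simp
  | n + 1, g => by
    rw [← (Fin.consEquiv fun _ => β).tsum_eq, ENNReal.tsum_prod', Fin.prod_univ_succ,
      ← tsum_pi_prod fun j => g j.succ, ← ENNReal.tsum_mul_right]
    refine tsum_congr fun i => ?_
    rw [← ENNReal.tsum_mul_left]
    exact tsum_congr fun b => by simp [Fin.prod_univ_succ]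

theorem tsum_prod_mul_eq_of_tsum_eq_one {β : Type*} {n : ℕ} {q : β → ℝ≥0∞} (hq : ∑' i, q i = 1)
    (f : β → ℝ≥0∞) (j : Fin n) :
    ∑' a : Fin n → β, (∏ k, q (a k)) * f (a j) = ∑' i, q i * f i := by
  classical
  calc ∑' a : Fin n → β, (∏ k, q (a k)) * f (a j)
      = ∑' a : Fin n → β, ∏ k, q (a k) * (if k = j then f (a k) else 1) :=
        tsum_congr fun a => by
          rw [Finset.prod_mul_distrib, Finset.prod_ite_eq' Finset.univ j fun k => f (a k)]
          simp
    _ = ∏ k, if k = j then ∑' i, q i * f i else 1 :=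
        (tsum_pi_prod fun k i => q i * if k = j then f i else 1).trans
          (Finset.prod_congr rfl fun k _ => by split_ifs <;> simp [hq])
    _ = ∑' i, q i * f i := by simp

end ENNReal

theorem IsCountablePartition.tsum_measure_eq_one {Ω : Type*} [MeasurableSpace Ω]
    {μ : Measure Ω} [IsProbabilityMeasure μ] {A : ℕ → Set Ω} (hA : IsCountablePartition μ A) :
    ∑' i, μ (A i) = 1 := by
  rw [← measure_iUnion hA.2.1 hA.1, hA.2.2, measure_univ]

namespace joinAtom

variable {Ω : Type*} {T : Ω → Ω} {A : ℕ → Set Ω} {n : ℕ}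

theorem subset_preimage (a : Fin n → ℕ) (j : Fin n) :
    joinAtom T A n a ⊆ T^[(j : ℕ)] ⁻¹' A (a j) :=
  Set.iInter_subset _ j

theorem pairwise_disjoint (hA : Pairwise (Function.onFun Disjoint A)) :
    Pairwise (Function.onFun Disjoint (joinAtom T A n)) := by
  intro a b hab
  obtain ⟨j, hj⟩ := Function.ne_iff.1 hab
  exact ((hA hj).preimage _).mono (subset_preimage a j) (subset_preimage b j)

variable [MeasurableSpace Ω]

theorem measurableSet (hT : Measurable T) (hA : ∀ i, MeasurableSet (A i)) (a : Fin n → ℕ) :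
    MeasurableSet (joinAtom T A n a) :=
  .iInter fun j => (hA (a j)).preimage (hT.iterate j)

variable {μ : Measure Ω}

theorem measure_le (hT : MeasurePreserving T μ μ) (hA : ∀ i, MeasurableSet (A i))
    (a : Fin n → ℕ) (j : Fin n) : μ (joinAtom T A n a) ≤ μ (A (a j)) :=
  (measure_mono (subset_preimage a j)).trans_eq
    ((hT.iterate j).measure_preimage (hA (a j)).nullMeasurableSet)

theorem tsum_measure_mul_le (hT : MeasurePreserving T μ μ) (hA : ∀ i, MeasurableSet (A i))
    (hAd : Pairwise (Function.onFun Disjoint A)) (f : ℕ → ℝ≥0∞) (j : Fin n) :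
    ∑' a, μ (joinAtom T A n a) * f (a j) ≤ ∑' i, μ (A i) * f i := by
  rw [← ENNReal.tsum_fiberwise _ fun a : Fin n → ℕ => a j]
  refine ENNReal.tsum_le_tsum fun i => ?_
  have hfiber : ∑' a : (fun a : Fin n → ℕ => a j) ⁻¹' {i}, μ (joinAtom T A n a) ≤ μ (A i) :=
    calc ∑' a : (fun a : Fin n → ℕ => a j) ⁻¹' {i}, μ (joinAtom T A n a)
        = μ (⋃ a : (fun a : Fin n → ℕ => a j) ⁻¹' {i}, joinAtom T A n a) :=
          (measure_iUnion (f := fun a : (fun a : Fin n → ℕ => a j) ⁻¹' {i} => joinAtom T A n a)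
            (fun a b hab => pairwise_disjoint hAd (Subtype.coe_ne_coe.2 hab))
            fun a => measurableSet hT.measurable hA a.1).symm
      _ ≤ μ (T^[(j : ℕ)] ⁻¹' A i) :=
          measure_mono (Set.iUnion_subset fun ⟨a, (ha : a j = i)⟩ => ha ▸ subset_preimage a j)
      _ = μ (A i) := (hT.iterate j).measure_preimage (hA i).nullMeasurableSet
  calc ∑' a : (fun a : Fin n → ℕ => a j) ⁻¹' {i}, μ (joinAtom T A n a) * f (a.1 j)
      = (∑' a : (fun a : Fin n → ℕ => a j) ⁻¹' {i}, μ (joinAtom T A n a)) * f i := by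
        rw [← ENNReal.tsum_mul_right]
        exact tsum_congr fun a => by rw [show a.1 j = i from a.2]
    _ ≤ μ (A i) * f i := by gcongr

end joinAtom

open Real

section

variable {Ω : Type*} [MeasurableSpace Ω] {μ : Measure Ω} {T : Ω → Ω} {A : ℕ → Set Ω} {w : ℝ}
  {n : ℕ}

theorem ofReal_mul_abs_log_rpow_joinAtom_le [IsFiniteMeasure μ] (hT : MeasurePreserving T μ μ)
    (hA : ∀ i, MeasurableSet (A i)) (hAsmall : ∀ i, μ (A i) ≤ ENNReal.ofReal (exp (-w)))
    (hw : 1 ≤ w) (hn : 0 < n) (a : Fin n → ℕ) :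
    ENNReal.ofReal ((μ (joinAtom T A n a)).toReal * |log (μ (joinAtom T A n a)).toReal| ^ w) ≤
      ENNReal.ofReal ((n : ℝ) ^ (w - 1)) * ((μ (joinAtom T A n a) + ∏ j, μ (A (a j))) *
        ∑ j, ENNReal.ofReal (|log (μ (A (a j))).toReal| ^ w)) := by
  have : Nonempty (Fin n) := ⟨⟨0, hn⟩⟩
  have h := mul_abs_log_rpow_le_of_forall_le (q := fun j => (μ (A (a j))).toReal) hw
    ENNReal.toReal_nonneg
    (fun j => ENNReal.toReal_mono (measure_ne_top _ _) (joinAtom.measure_le hT hA a j))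
    (fun j => ENNReal.toReal_le_of_le_ofReal (exp_nonneg _) (hAsmall _))
  rw [Fintype.card_fin] at h
  refine (ENNReal.ofReal_le_ofReal h).trans_eq ?_
  rw [ENNReal.ofReal_mul (by positivity), ENNReal.ofReal_mul (by positivity),
    ENNReal.ofReal_add ENNReal.toReal_nonneg (by positivity),
    ENNReal.ofReal_prod_of_nonneg fun j _ => ENNReal.toReal_nonneg,
    ENNReal.ofReal_sum_of_nonneg fun j _ => by positivity]
  simp only [ENNReal.ofReal_toReal (measure_ne_top _ _)]

theorem tsum_ofReal_mul_abs_log_rpow_joinAtom_le [IsProbabilityMeasure μ]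
    (hT : MeasurePreserving T μ μ) (hA : IsCountablePartition μ A)
    (hAsmall : ∀ i, μ (A i) ≤ ENNReal.ofReal (exp (-w))) (hw : 1 ≤ w) (hn : 0 < n) :
    ∑' a, ENNReal.ofReal ((μ (joinAtom T A n a)).toReal * |log (μ (joinAtom T A n a)).toReal| ^ w)
      ≤ ENNReal.ofReal ((n : ℝ) ^ w) *
        (2 * ∑' i, μ (A i) * ENNReal.ofReal (|log (μ (A i)).toReal| ^ w)) := by
  set L : ℕ → ℝ≥0∞ := fun i => ENNReal.ofReal (|log (μ (A i)).toReal| ^ w)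
  set K := ∑' i, μ (A i) * L i
  calc _ ≤ ∑' a, ENNReal.ofReal ((n : ℝ) ^ (w - 1)) *
          ((μ (joinAtom T A n a) + ∏ j, μ (A (a j))) * ∑ j, L (a j)) :=
        ENNReal.tsum_le_tsum (ofReal_mul_abs_log_rpow_joinAtom_le hT hA.1 hAsmall hw hn)
    _ = ENNReal.ofReal ((n : ℝ) ^ (w - 1)) * ∑ j : Fin n,
          (∑' a : Fin n → ℕ, μ (joinAtom T A n a) * L (a j) +
            ∑' a : Fin n → ℕ, (∏ k, μ (A (a k))) * L (a j)) := by
        simp only [← ENNReal.tsum_add, ENNReal.tsum_mul_left]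
        rw [← Summable.tsum_finsetSum fun _ _ => ENNReal.summable]
        simp only [Finset.mul_sum, add_mul]
    _ ≤ ENNReal.ofReal ((n : ℝ) ^ (w - 1)) * ∑ _j : Fin n, (K + K) := by
        gcongr with j
        · exact joinAtom.tsum_measure_mul_le hT hA.1 hA.2.1 L j
        · exact (ENNReal.tsum_prod_mul_eq_of_tsum_eq_one hA.tsum_measure_eq_one L j).le
    _ = ENNReal.ofReal ((n : ℝ) ^ w) * (2 * K) := by
        have hn' : (0 : ℝ) < n := by exact_mod_cast hn
        rw [Finset.sum_const, Finset.card_univ, Fintype.card_fin, nsmul_eq_mul, ← two_mul,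
          ← mul_assoc, ← ENNReal.ofReal_natCast, ← ENNReal.ofReal_mul (by positivity),
          rpow_sub_one hn'.ne', div_mul_cancel₀ _ hn'.ne']

end

theorem Kw_join_le {Ω : Type*} [MeasurableSpace Ω]
    (μ : Measure Ω) [IsProbabilityMeasure μ] (T : Ω → Ω)
    (hT : MeasurePreserving T μ μ) (w : ℝ) (hw : 1 ≤ w)
    (A : ℕ → Set Ω) (hA : IsCountablePartition μ A)
    (hAsmall : ∀ i, μ (A i) ≤ ENNReal.ofReal (Real.exp (-w)))
    (hKA : Summable fun i => (μ (A i)).toReal * |Real.log (μ (A i)).toReal| ^ w) :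
    ∃ C : ℝ, ∀ n : ℕ, 1 ≤ n → KwJoin μ w T A n ≤ C * (n : ℝ) ^ w := by
  set K := ∑' i, μ (A i) * ENNReal.ofReal (|log (μ (A i)).toReal| ^ w)
  have hK : K = ENNReal.ofReal (∑' i, (μ (A i)).toReal * |log (μ (A i)).toReal| ^ w) := by
    rw [ENNReal.ofReal_tsum_of_nonneg (fun i => by positivity) hKA]
    refine tsum_congr fun i => ?_
    rw [ENNReal.ofReal_mul ENNReal.toReal_nonneg, ENNReal.ofReal_toReal (measure_ne_top _ _)]
  refine ⟨2 * K.toReal, fun n hn => ?_⟩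
  -- bounding the sum in `ℝ≥0∞` needs no summability of the atom terms
  calc KwJoin μ w T A n
      = (∑' a, ENNReal.ofReal
          ((μ (joinAtom T A n a)).toReal * |log (μ (joinAtom T A n a)).toReal| ^ w)).toReal := by
        rw [ENNReal.tsum_toReal_eq fun _ => ENNReal.ofReal_ne_top]
        exact tsum_congr fun a => (ENNReal.toReal_ofReal (by positivity)).symm
    _ ≤ (ENNReal.ofReal ((n : ℝ) ^ w) * (2 * K)).toReal :=
        ENNReal.toReal_mono (by simp [hK, ENNReal.mul_eq_top])
          (tsum_ofReal_mul_abs_log_rpow_joinAtom_le hT hA hAsmall hw hn)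
    _ = 2 * K.toReal * (n : ℝ) ^ w := by
        rw [ENNReal.toReal_mul, ENNReal.toReal_mul, ENNReal.toReal_ofReal (by positivity)]
        simp only [ENNReal.toReal_ofNat]
        ring
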